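/- For n ≥ 4 with n even and 2 ≤ k ≤ n-2 with k odd, the subgroup ⟨r_n, r_{n-1}, r_k⟩ of Sym_n preserves the partition of {1,...,n} into odd positions B_1 and even positions B_2 (each generator either fixes both blocks or swaps them); hence it is a proper subgroup of Sym_n. -/

import Mathlib

/-!
Colour position `x` by its parity in `ZMod 2`. A permutation preserves the partition into odd and
even positions exactly when it shifts every colour by the same constant, and such permutations form
a subgroup. A prefix reversal `r i` sends `x` to `i + 1 - x ≡ x + (i + 1)`, so the full reversal
`r n` shifts by the constant `n + 1`, and for odd `i` the reversal `r i` preserves every parity,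
both on the reversed prefix and on the fixed tail. Since `n - 1` and `k` are odd, all three
generators lie in this subgroup. It is proper, as it does not contain the transposition `(1 2)`,
which changes the parity of `1` but not that of `3`.
-/

/-- The prefix reversal `r i` on positions `1..n` (0-indexed as `Fin n`):
position `x+1 ↦ i+1-(x+1)` for `x+1 ≤ i`, i.e. `x ↦ i-1-x` for `x < i`, fixing the rest. -/
def pr (n i : ℕ) : Equiv.Perm (Fin n) :=
  Function.Involutive.toPerm
    (fun x => if h : x.val < i ∧ i ≤ n then ⟨i - 1 - x.val, by omega⟩ else x)
    (by
      intro x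
      apply Fin.ext
      dsimp only
      split_ifs with h1 h2 h3 <;> simp_all <;> omega)

lemma pr_apply (n i : ℕ) (x : Fin n) :
    (pr n i x).val = if x.val < i ∧ i ≤ n then i - 1 - x.val else x.val := by
  simp only [pr]
  split_ifs with h <;> simp [Function.Involutive.toPerm, h]

section ColorShift

variable {α G : Type*} [AddGroup G]

def colorShiftSubgroup (c : α → G) : Subgroup (Equiv.Perm α) where
  carrier := {g | ∃ a, ∀ x, c (g x) = c x + a}
  one_mem' := ⟨0, fun x => by simp⟩
  mul_mem' := by
    rintro g h ⟨a, hg⟩ ⟨b, hh⟩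
    exact ⟨b + a, fun x => by simp [hg, hh, add_assoc]⟩
  inv_mem' := by
    rintro g ⟨a, hg⟩
    refine ⟨-a, fun x => ?_⟩
    simpa [sub_eq_add_neg] using congrArg (· - a) (hg (g⁻¹ x)).symm

lemma colorShiftSubgroup_ne_top {c : α → G} {x y z : α} (hzx : z ≠ x) (hzy : z ≠ y)
    (hxy : c x ≠ c y) : colorShiftSubgroup c ≠ ⊤ := by
  classical
  intro htop
  obtain ⟨a, ha⟩ : Equiv.swap x y ∈ colorShiftSubgroup c := htop ▸ Subgroup.mem_top _
  have ha_zero : a = 0 := by simpa [Equiv.swap_apply_of_ne_of_ne hzx hzy] using ha z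
  exact hxy (by simpa [ha_zero] using (ha x).symm)

end ColorShift

def finParity (n : ℕ) (x : Fin n) : ZMod 2 := x.val

lemma finParity_eq_iff {n : ℕ} (x y : Fin n) (a : ℕ) :
    finParity n x = finParity n y + a ↔ x.val % 2 = (y.val + a) % 2 := by
  rw [finParity, finParity, ← Nat.cast_add, ZMod.natCast_eq_natCast_iff']

lemma pr_self_mem_colorShiftSubgroup (n : ℕ) : pr n n ∈ colorShiftSubgroup (finParity n) := by
  refine ⟨((n - 1 : ℕ) : ZMod 2), fun x => ?_⟩
  rw [finParity_eq_iff, pr_apply, if_pos ⟨x.isLt, le_rfl⟩]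
  omega

lemma pr_mem_colorShiftSubgroup_of_odd (n : ℕ) {i : ℕ} (hi : Odd i) :
    pr n i ∈ colorShiftSubgroup (finParity n) := by
  obtain ⟨m, rfl⟩ := hi
  refine ⟨0, fun x => ?_⟩
  rw [← Nat.cast_zero, finParity_eq_iff, pr_apply]
  split_ifs <;> omega

lemma parity_preserved_or_swapped {n : ℕ} {g : Equiv.Perm (Fin n)}
    (hg : g ∈ colorShiftSubgroup (finParity n)) :
    (∀ x : Fin n, ((g x).val + 1) % 2 = (x.val + 1) % 2) ∨
      (∀ x : Fin n, ((g x).val + 1) % 2 = x.val % 2) := by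
  obtain ⟨a, ha⟩ := hg
  have hshift (x : Fin n) : (g x).val % 2 = (x.val + a.val) % 2 :=
    (finParity_eq_iff (g x) x a.val).mp (by rw [ZMod.natCast_zmod_val]; exact ha x)
  rcases show a.val = 0 ∨ a.val = 1 by have := ZMod.val_lt a; omega with h | h
  · exact .inl fun x => by have := hshift x; omega
  · exact .inr fun x => by have := hshift x; omega

theorem stmt18_general (n k : ℕ) (hn : 4 ≤ n) (hne : Even n) (hko : Odd k) :
    (∀ g ∈ Subgroup.closure ({pr n n, pr n (n - 1), pr n k} : Set (Equiv.Perm (Fin n))),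
      (∀ x : Fin n, ((g x).val + 1) % 2 = (x.val + 1) % 2) ∨
      (∀ x : Fin n, ((g x).val + 1) % 2 = x.val % 2)) ∧
    Subgroup.closure ({pr n n, pr n (n - 1), pr n k} : Set (Equiv.Perm (Fin n))) ≠ ⊤ := by
  have hsub : Subgroup.closure ({pr n n, pr n (n - 1), pr n k} : Set (Equiv.Perm (Fin n))) ≤
      colorShiftSubgroup (finParity n) := by
    have hodd : Odd (n - 1) := Nat.Even.sub_odd (by omega) hne odd_one
    rw [Subgroup.closure_le]
    rintro g (rfl | rfl | rfl)
    exacts [pr_self_mem_colorShiftSubgroup n, pr_mem_colorShiftSubgroup_of_odd n hodd,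
      pr_mem_colorShiftSubgroup_of_odd n hko]
  refine ⟨fun g hg => parity_preserved_or_swapped (hsub hg), fun htop => ?_⟩
  have hproper : colorShiftSubgroup (finParity n) ≠ ⊤ :=
    colorShiftSubgroup_ne_top (x := ⟨0, by omega⟩) (y := ⟨1, by omega⟩) (z := ⟨2, by omega⟩)
      (by simp [Fin.ext_iff]) (by simp [Fin.ext_iff]) (by simp [finParity])
  exact hproper (top_le_iff.mp (htop ▸ hsub))

theorem stmt18 (n k : ℕ) (hn : 4 ≤ n) (hne : Even n) (hk1 : 2 ≤ k) (hk2 : k ≤ n - 2)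
    (hko : Odd k) :
    (∀ g ∈ Subgroup.closure ({pr n n, pr n (n - 1), pr n k} : Set (Equiv.Perm (Fin n))),
      (∀ x : Fin n, ((g x).val + 1) % 2 = (x.val + 1) % 2) ∨
      (∀ x : Fin n, ((g x).val + 1) % 2 = x.val % 2)) ∧
    Subgroup.closure ({pr n n, pr n (n - 1), pr n k} : Set (Equiv.Perm (Fin n))) ≠ ⊤ :=
  stmt18_general n k hn hne hko
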